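/- arXiv:2002.05180 — 3 statements merged into one kernel-verified Lean document; each statement's English description precedes it below -/
import Mathlib

section
/- Let ε be a circuit error with cluster decomposition ε = ∑_{i∈I} ε_i (the decomposition induced by connected components of the accumulated error in the sequential Tanner graph). If the outcome m(ε) = 0, then m(ε_i) = 0 for every i ∈ I. -/
/-- Vertices of the sequential Tanner graph: data nodes `v_{i,j}` for
`0 ≤ i ≤ nM`, `1 ≤ j ≤ nD` and outcome nodes `u_i` for the `nM` measurements. -/
abbrev Vtx (nM nD : ℕ) := (Fin (nM + 1) × Fin nD) ⊕ Fin nM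

/-- A circuit error: input error `e 0`, internal errors `e 1, …, e nM`, and
measurement error `f`. -/
structure CircErr (nM nD : ℕ) where
  e : Fin (nM + 1) → Fin nD → ZMod 2
  f : Fin nM → ZMod 2

/-- The accumulated data error `ē^i = ∑_{k ≤ i} e^k`. -/
def acc {nM nD : ℕ} (ε : CircErr nM nD) (i : Fin (nM + 1)) (j : Fin nD) : ZMod 2 :=
  ∑ k : Fin (nM + 1), if (k : ℕ) ≤ (i : ℕ) then ε.e k j else 0

/-- The measurement outcome: the `i`-th (0-indexed) outcome bit is the parity
of the accumulated error `ē^i` on the support of row `i` of `H`, plus `f i`. -/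
def outcomeErr {nM nD : ℕ} (H : Fin nM → Fin nD → ZMod 2) (ε : CircErr nM nD) :
    Fin nM → ZMod 2 := fun i =>
  (∑ j, H i j * acc ε i.castSucc j) + ε.f i

/-- Residual data error `π(ε) = ∑_i e^i = ē^{nM}`. -/
def residualErr {nM nD : ℕ} (ε : CircErr nM nD) : Fin nD → ZMod 2 :=
  fun j => ∑ k, ε.e k j

/-- Hamming weight of a circuit error. -/
def wtErr {nM nD : ℕ} (ε : CircErr nM nD) : ℕ :=
  (∑ i, hammingNorm (ε.e i)) + hammingNorm ε.f

/-- Adjacency in the sequential Tanner graph: (i) consecutive data nodes in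
the same column; (ii) two data nodes of row `i` both involved in measurement
`i`; (iii) a data node of row `i` involved in measurement `i` and the
outcome node `u_i`. -/
def Adj {nM nD : ℕ} (H : Fin nM → Fin nD → ZMod 2) :
    Vtx nM nD → Vtx nM nD → Prop
  | Sum.inl (i, j), Sum.inl (i', j') =>
      (j = j' ∧ ((i : ℕ) + 1 = (i' : ℕ) ∨ (i' : ℕ) + 1 = (i : ℕ))) ∨
      (∃ k : Fin nM, (i : ℕ) = (k : ℕ) ∧ (i' : ℕ) = (k : ℕ) ∧
        H k j = 1 ∧ H k j' = 1)
  | Sum.inl (i, j), Sum.inr k => (i : ℕ) = (k : ℕ) ∧ H k j = 1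
  | Sum.inr k, Sum.inl (i, j) => (i : ℕ) = (k : ℕ) ∧ H k j = 1
  | Sum.inr _, Sum.inr _ => False

/-- Support of the accumulated error `ε̄` in the sequential Tanner graph. -/
def accSupp {nM nD : ℕ} (ε : CircErr nM nD) : Set (Vtx nM nD) :=
  fun v => v.elim (fun p => acc ε p.1 p.2 ≠ 0) (fun k => ε.f k ≠ 0)

/-- One step of a path inside the support of the accumulated error. -/
def Step {nM nD : ℕ} (H : Fin nM → Fin nD → ZMod 2) (ε : CircErr nM nD)
    (u v : Vtx nM nD) : Prop :=
  u ∈ accSupp ε ∧ v ∈ accSupp ε ∧ Adj H u v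

/-- The connected component (cluster) of the vertex `v0` inside the support of
the accumulated error of `ε`. -/
def cluster {nM nD : ℕ} (H : Fin nM → Fin nD → ZMod 2) (ε : CircErr nM nD)
    (v0 : Vtx nM nD) : Set (Vtx nM nD) :=
  fun u => u ∈ accSupp ε ∧ Relation.ReflTransGen (Step H ε) v0 u

open Classical in
/-- if a circuit error `ε` has trivial outcome, then each cluster
of its cluster decomposition (the part of `ε` corresponding to a connected
component of the accumulated error) has trivial outcome as well: for every
measurement `i`, the parity of the accumulated error restricted to the cluster
plus the restricted outcome flip vanishes. -/
theorem stmt_9 (nM nD : ℕ) (H : Fin nM → Fin nD → ZMod 2) (ε : CircErr nM nD)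
    (hout : ∀ i, outcomeErr H ε i = 0)
    (v0 : Vtx nM nD) (hv0 : v0 ∈ accSupp ε) :
    ∀ i : Fin nM,
      (∑ j, if Sum.inl (i.castSucc, j) ∈ cluster H ε v0
          then H i j * acc ε i.castSucc j else 0)
        + (if Sum.inr i ∈ cluster H ε v0 then ε.f i else 0) = 0 := by
  intro i
  have hne1 : ∀ a : ZMod 2, a ≠ 0 → a = 1 := by decide
  -- predicate: vertex is relevant to measurement i and in support
  set S : Vtx nM nD → Prop := fun y =>
    (∃ j, y = Sum.inl (i.castSucc, j) ∧ H i j = 1 ∧ acc ε i.castSucc j ≠ 0) ∨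
    (y = Sum.inr i ∧ ε.f i ≠ 0) with hS
  by_cases hc : ∃ x, x ∈ cluster H ε v0 ∧ S x
  · obtain ⟨x, hx, hxS⟩ := hc
    have hmem : ∀ y, S y → y ∈ cluster H ε v0 := by
      intro y hy
      by_cases hxy : y = x
      · rwa [hxy]
      · have hysupp : y ∈ accSupp ε := by
          rcases hy with ⟨j, rfl, _, h2⟩ | ⟨rfl, h2⟩
          · exact h2
          · exact h2
        refine ⟨hysupp, hx.2.tail ⟨hx.1, hysupp, ?_⟩⟩
        rcases hxS with ⟨j, rfl, hx1, _⟩ | ⟨rfl, _⟩ <;>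
          rcases hy with ⟨j', rfl, hy1, _⟩ | ⟨rfl, _⟩
        · exact Or.inr ⟨i, by simp, by simp, hx1, hy1⟩
        · exact ⟨by simp, hx1⟩
        · exact ⟨by simp, hy1⟩
        · exact absurd rfl hxy
    have h1 : ∀ j, (if Sum.inl (i.castSucc, j) ∈ cluster H ε v0
        then H i j * acc ε i.castSucc j else 0) = H i j * acc ε i.castSucc j := by
      intro j
      by_cases hz : H i j * acc ε i.castSucc j = 0
      · simp [hz]
      · have hH : H i j = 1 := hne1 _ (fun h => hz (by rw [h, zero_mul]))
        have ha : acc ε i.castSucc j ≠ 0 := fun h => hz (by rw [h, mul_zero])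
        rw [if_pos (hmem _ (Or.inl ⟨j, rfl, hH, ha⟩))]
    have h2 : (if Sum.inr i ∈ cluster H ε v0 then ε.f i else 0) = ε.f i := by
      by_cases hf : ε.f i = 0
      · simp [hf]
      · rw [if_pos (hmem _ (Or.inr ⟨rfl, hf⟩))]
    simp only [h1, h2]
    exact hout i
  · push_neg at hc
    have h1 : ∀ j, (if Sum.inl (i.castSucc, j) ∈ cluster H ε v0
        then H i j * acc ε i.castSucc j else 0) = 0 := by
      intro j
      by_cases hin : Sum.inl (i.castSucc, j) ∈ cluster H ε v0
      · rw [if_pos hin]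
        have ha : acc ε i.castSucc j ≠ 0 := hin.1
        by_cases hH : H i j = 0
        · rw [hH, zero_mul]
        · exact absurd (Or.inl ⟨j, rfl, hne1 _ hH, ha⟩) (hc _ hin)
      · rw [if_neg hin]
    have h2 : (if Sum.inr i ∈ cluster H ε v0 then ε.f i else 0) = 0 := by
      by_cases hin : Sum.inr i ∈ cluster H ε v0
      · exact absurd (Or.inr ⟨rfl, hin.1⟩) (hc _ hin)
      · rw [if_neg hin]
    simp [h1, h2]
end

section
/- The circuit distance satisfies d_circ ≤ min(d_D, n_D + d_M), where d_D is the minimum distance of the data code C_D of length n_D, and d_M is the minimum distance of the measurement code C_M. -/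
/-- A propagating error: a circuit error with trivial outcome whose
accumulated error contains a path connecting the input row `V_in` to the
output row `V_out` of the sequential Tanner graph. -/
def Propagating {nM nD : ℕ} (H : Fin nM → Fin nD → ZMod 2)
    (ε : CircErr nM nD) : Prop :=
  (∀ i, outcomeErr H ε i = 0) ∧
  ∃ j j' : Fin nD,
    Sum.inl ((0 : Fin (nM + 1)), j) ∈ accSupp ε ∧
    Sum.inl (Fin.last nM, j') ∈ accSupp ε ∧
    Relation.ReflTransGen (Step H ε)
      (Sum.inl ((0 : Fin (nM + 1)), j)) (Sum.inl (Fin.last nM, j'))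

/-- Auxiliary: circuit error with all error at time 0. -/
def inputErr {nM nD : ℕ} (x : Fin nD → ZMod 2) (f : Fin nM → ZMod 2) :
    CircErr nM nD :=
  ⟨fun k j => if k = 0 then x j else 0, f⟩

lemma acc_inputErr {nM nD : ℕ} (x : Fin nD → ZMod 2) (f : Fin nM → ZMod 2)
    (i : Fin (nM + 1)) (j : Fin nD) : acc (inputErr x f) i j = x j := by
  unfold acc inputErr
  have h : ∀ k : Fin (nM + 1),
      (if (k : ℕ) ≤ (i : ℕ) then (if k = 0 then x j else 0) else 0)
        = if k = 0 then x j else 0 := by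
    intro k
    by_cases hk : k = 0
    · subst hk; simp
    · simp [hk]
  simp only [h]
  simp

lemma wt_inputErr {nM nD : ℕ} (x : Fin nD → ZMod 2) (f : Fin nM → ZMod 2) :
    wtErr (inputErr x f) = hammingNorm x + hammingNorm f := by
  unfold wtErr inputErr
  congr 1
  rw [Fintype.sum_eq_single (0 : Fin (nM + 1))]
  · simp
  · intro k hk
    simp only [hk, if_false]
    exact hammingNorm_zero

lemma col_path {nM nD : ℕ} (H : Fin nM → Fin nD → ZMod 2) (ε : CircErr nM nD)
    (j : Fin nD) (h : ∀ i, acc ε i j ≠ 0) :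
    ∀ m (hm : m ≤ nM),
      Relation.ReflTransGen (Step H ε) (Sum.inl ((0 : Fin (nM + 1)), j))
        (Sum.inl (⟨m, Nat.lt_succ_of_le hm⟩, j)) := by
  intro m
  induction m with
  | zero => intro hm; exact Relation.ReflTransGen.refl
  | succ m ih =>
    intro hm
    refine Relation.ReflTransGen.tail (ih (Nat.le_of_succ_le hm)) ?_
    exact ⟨h _, h _, Or.inl ⟨rfl, Or.inl rfl⟩⟩

lemma sum_Hm_mul {nD nM rD : ℕ}
    (HD : Fin rD → Fin nD → ZMod 2) (G : Fin rD → Fin nM → ZMod 2)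
    (Hm : Fin nM → Fin nD → ZMod 2)
    (hHm : ∀ i j, Hm i j = ∑ k, G k i * HD k j)
    (x : Fin nD → ZMod 2) (i : Fin nM) :
    (∑ j, Hm i j * x j) = ∑ k, G k i * (∑ j, HD k j * x j) := by
  simp_rw [hHm, Finset.sum_mul, Finset.mul_sum, mul_assoc]
  rw [Finset.sum_comm]

lemma prop_inputErr {nD nM rD : ℕ}
    (HD : Fin rD → Fin nD → ZMod 2) (G : Fin rD → Fin nM → ZMod 2)
    (Hm : Fin nM → Fin nD → ZMod 2)
    (hHm : ∀ i j, Hm i j = ∑ k, G k i * HD k j)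
    (x : Fin nD → ZMod 2) (f : Fin nM → ZMod 2) (hxne : x ≠ 0)
    (hout : ∀ i, (∑ k, G k i * (∑ j, HD k j * x j)) + f i = 0) :
    Propagating Hm (inputErr x f) := by
  constructor
  · intro i
    unfold outcomeErr
    simp only [acc_inputErr]
    rw [sum_Hm_mul HD G Hm hHm]
    exact hout i
  · obtain ⟨j, hj⟩ := Function.ne_iff.mp hxne
    have hsupp : ∀ i : Fin (nM + 1), Sum.inl (i, j) ∈ accSupp (inputErr x f) := by
      intro i
      show acc (inputErr x f) i j ≠ 0
      rw [acc_inputErr]; simpa using hj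
    refine ⟨j, j, hsupp 0, hsupp (Fin.last nM), ?_⟩
    have := col_path Hm (inputErr x f) j
      (fun i => by rw [acc_inputErr]; simpa using hj) nM le_rfl
    exact this

/-- the circuit distance satisfies
`d_circ ≤ min(d_D, n_D + d_M)`.  Here the data code `C_D` is defined by the
(full-rank) parity check matrix `HD` with `rD` rows and has minimum distance
`dD`; the measurement code `C_M` is generated by `G` (messages of length `rD`,
codewords of length `nM`) and has minimum distance `dM`; the measurement
matrix is `Hm = G^T HD`, and `dcirc` is the minimum weight of a propagating
error for `Hm`. -/
theorem stmt_12 (nD nM rD : ℕ)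
    (HD : Fin rD → Fin nD → ZMod 2)
    (G : Fin rD → Fin nM → ZMod 2)
    (Hm : Fin nM → Fin nD → ZMod 2)
    (hHm : ∀ i j, Hm i j = ∑ k, G k i * HD k j)
    (dD : ℕ)
    (hdD : IsLeast {w | ∃ x : Fin nD → ZMod 2,
        (∀ k, ∑ j, HD k j * x j = 0) ∧ x ≠ 0 ∧ hammingNorm x = w} dD)
    (dM : ℕ)
    (hdM : IsLeast {w | ∃ s : Fin rD → ZMod 2,
        (fun i => ∑ k, s k * G k i) ≠ 0 ∧
        hammingNorm (fun i => ∑ k, s k * G k i) = w} dM)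
    (hsurj : ∀ s : Fin rD → ZMod 2, ∃ x : Fin nD → ZMod 2,
        ∀ k, ∑ j, HD k j * x j = s k)
    (dcirc : ℕ)
    (hdc : IsLeast {w | ∃ ω : CircErr nM nD, Propagating Hm ω ∧ wtErr ω = w}
        dcirc) :
    dcirc ≤ min dD (nD + dM) := by
  refine le_min ?_ ?_
  · -- use a minimum weight codeword of C_D
    obtain ⟨x, hx0, hxne, hxw⟩ := hdD.1
    refine hdc.2 ⟨inputErr x 0, ?_, ?_⟩
    · refine prop_inputErr HD G Hm hHm x 0 hxne ?_
      intro i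
      simp [hx0]
    · rw [wt_inputErr, hxw]
      simp [hammingNorm_zero]
  · -- use a minimum weight codeword of C_M
    obtain ⟨s, hsne, hsw⟩ := hdM.1
    obtain ⟨y, hy⟩ := hsurj s
    set c : Fin nM → ZMod 2 := fun i => ∑ k, s k * G k i with hc
    have hyne : y ≠ 0 := by
      intro h0
      apply hsne
      funext i
      have hs0 : ∀ k, s k = 0 := by
        intro k; rw [← hy k, h0]; simp
      simp [hc, hs0]
    have hprop : Propagating Hm (inputErr y c) := by
      refine prop_inputErr HD G Hm hHm y c hyne ?_
      intro i
      have : (∑ k, G k i * (∑ j, HD k j * y j)) = c i := by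
        simp_rw [hy, hc]
        exact Finset.sum_congr rfl fun k _ => mul_comm _ _
      rw [this]
      exact CharTwo.add_self_eq_zero (c i)
    calc dcirc ≤ wtErr (inputErr y c) := hdc.2 ⟨inputErr y c, hprop, rfl⟩
      _ = hammingNorm y + hammingNorm c := wt_inputErr y c
      _ ≤ nD + dM := by
          refine Nat.add_le_add ?_ ?_
          · simpa using (hammingNorm_le_card_fintype (x := y))
          · rw [hc, hsw]
end

section
/- Let ε be a circuit error with outcome m, let ε̂ be a minimum weight circuit error with outcome m, and let ω = ε + ε̂ with cluster decomposition ω = ∑_i ω_i. Let ε_i = ε ∩ V(ω_i) and ε̂_i = ε̂ ∩ V(ω_i). Then for every cluster i, |ε_i| ≥ |ε̂_i|. -/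
instance {nM nD : ℕ} : Add (CircErr nM nD) :=
  ⟨fun a b => ⟨a.e + b.e, a.f + b.f⟩⟩

/-- Given the connected component `U` of the accumulated error of a circuit
error `ω`, this is the vertex support `V(ω_i)` of the corresponding cluster
`ω_i` of the cluster decomposition of `ω`: the de-accumulation of the
restriction to `U` of the accumulated error is nonzero on a data node `(i,j)`
exactly when one of `(i,j)`, `(i-1,j)` belongs to `U` and not both; the
outcome flips of the cluster are those in `U`. -/
def clusterVset {nM nD : ℕ} (U : Set (Vtx nM nD)) : Set (Vtx nM nD) :=
  fun v => v.elim
    (fun p => Xor' (Sum.inl p ∈ U)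
      (∃ _ : 0 < (p.1 : ℕ),
        Sum.inl ((⟨(p.1 : ℕ) - 1, by have := p.1.isLt; omega⟩ :
          Fin (nM + 1)), p.2) ∈ U))
    (fun k => Sum.inr k ∈ U)

/-- The weight of the restriction `ε ∩ A` of a circuit error to a vertex set:
the number of support vertices of `ε` lying in `A`. -/
noncomputable def wtOn {nM nD : ℕ} (ε : CircErr nM nD) (A : Set (Vtx nM nD)) : ℕ :=
  Nat.card {v : Vtx nM nD //
    v ∈ A ∧ v.elim (fun p => ε.e p.1 p.2 ≠ 0) (fun k => ε.f k ≠ 0)}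

/-!
Write `ω = ε + ε̂`, let `U` be the connected component of `v0` in the support of the accumulated
error of `ω`, and let `V = clusterVset U`. The cluster `ω_i` is the circuit error whose accumulation
is the indicator of `U`; it is `1` exactly on `V`, where `ω` is `1` as well. Hence `ε̂ + ω_i` agrees
with `ε` on `V` and with `ε̂` off `V`, so its weight is `|ε ∩ V| + |ε̂ \ V|`.

The outcome node `u_i` together with the data nodes of row `i` checked by measurement `i` form a
clique of the sequential Tanner graph. So this clique meets `U` either not at all or exactly in the
support of the accumulated error of `ω`: every outcome bit of `ω_i` is `0` or equal to that of
`ω`, which is `0` because `ε` and `ε̂` have the same outcome. Thus `ε̂ + ω_i` has the outcome of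
`ε̂`, and minimality of `ε̂` gives `|ε̂ ∩ V| + |ε̂ \ V| ≤ |ε ∩ V| + |ε̂ \ V|`.
-/

lemma zmod_two_eq_one_of_ne_zero {x : ZMod 2} (hx : x ≠ 0) : x = 1 := by
  revert x
  decide

section

variable {nM nD : ℕ}

namespace CircErr

def val (ε : CircErr nM nD) : Vtx nM nD → ZMod 2 :=
  Sum.elim (fun p => ε.e p.1 p.2) ε.f

def accVal (ε : CircErr nM nD) : Vtx nM nD → ZMod 2 :=
  Sum.elim (fun p => acc ε p.1 p.2) ε.f

def ofVal (g : Vtx nM nD → ZMod 2) : CircErr nM nD :=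
  ⟨fun i j => g (Sum.inl (i, j)), fun k => g (Sum.inr k)⟩

@[simp] lemma add_e (a b : CircErr nM nD) : (a + b).e = a.e + b.e := rfl

@[simp] lemma add_f (a b : CircErr nM nD) : (a + b).f = a.f + b.f := rfl

@[simp] lemma val_ofVal (g : Vtx nM nD → ZMod 2) : (ofVal g).val = g := by
  ext (_ | _) <;> rfl

@[simp] lemma val_add (a b : CircErr nM nD) : (a + b).val = a.val + b.val := by
  ext (_ | _) <;> rfl

@[simp] lemma accVal_inl (ε : CircErr nM nD) (i : Fin (nM + 1)) (j : Fin nD) :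
    ε.accVal (Sum.inl (i, j)) = acc ε i j := rfl

lemma mem_accSupp_iff (ε : CircErr nM nD) (v : Vtx nM nD) :
    v ∈ accSupp ε ↔ ε.accVal v ≠ 0 := by
  cases v <;> rfl

end CircErr

open CircErr

section Weight

open Finset

lemma wtOn_eq_card_filter (ε : CircErr nM nD) (A : Set (Vtx nM nD)) [DecidablePred (· ∈ A)] :
    wtOn ε A = #{v | ε.val v ≠ 0 ∧ v ∈ A} := by
  classical
  rw [wtOn, Nat.card_eq_fintype_card, Fintype.card_subtype]
  congr 2 with (_ | _) <;> exact and_comm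

lemma wtErr_eq_card_filter (ε : CircErr nM nD) : wtErr ε = #{v | ε.val v ≠ 0} := by
  simp only [wtErr, hammingNorm, Finset.card_filter, Fintype.sum_sum_type, Fintype.sum_prod_type]
  rfl

lemma wtOn_add_wtOn_compl (ε : CircErr nM nD) (A : Set (Vtx nM nD)) :
    wtOn ε A + wtOn ε Aᶜ = wtErr ε := by
  classical
  rw [wtOn_eq_card_filter, wtOn_eq_card_filter, wtErr_eq_card_filter, ← filter_filter,
    ← filter_filter]
  exact card_filter_add_card_filter_not (· ∈ A)

lemma wtOn_congr {a b : CircErr nM nD} {A : Set (Vtx nM nD)}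
    (h : ∀ v ∈ A, a.val v = b.val v) : wtOn a A = wtOn b A := by
  classical
  rw [wtOn_eq_card_filter, wtOn_eq_card_filter]
  exact congrArg _ (filter_congr fun v _ => and_congr_left fun hv => by rw [h v hv])

end Weight

lemma acc_add (a b : CircErr nM nD) (i : Fin (nM + 1)) (j : Fin nD) :
    acc (a + b) i j = acc a i j + acc b i j := by
  simp only [acc, ← Finset.sum_add_distrib]
  exact Finset.sum_congr rfl fun k _ => by split_ifs <;> simp

lemma outcomeErr_add (H : Fin nM → Fin nD → ZMod 2) (a b : CircErr nM nD) :
    outcomeErr H (a + b) = outcomeErr H a + outcomeErr H b := by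
  ext i
  simp only [outcomeErr, acc_add, mul_add, Finset.sum_add_distrib, Pi.add_apply, add_f]
  ring

@[simp] lemma acc_zero (ε : CircErr nM nD) (j : Fin nD) : acc ε 0 j = ε.e 0 j := by
  rw [acc, Finset.sum_eq_single 0
    (fun k _ hk => if_neg fun h => hk (Fin.ext (by simpa using h))) (by simp)]
  simp

lemma acc_succ (ε : CircErr nM nD) (i : Fin nM) (j : Fin nD) :
    acc ε i.succ j = acc ε i.castSucc j + ε.e i.succ j := by
  have hsplit : ∀ k : Fin (nM + 1), (if (k : ℕ) ≤ i.succ then ε.e k j else 0) =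
      (if (k : ℕ) ≤ i.castSucc then ε.e k j else 0) + (if k = i.succ then ε.e k j else 0) := by
    intro k
    by_cases hk : k = i.succ
    · subst hk
      simp
    · have : (k : ℕ) ≠ i + 1 := fun h => hk (Fin.ext (by simpa using h))
      simp only [hk, if_false, add_zero, Fin.val_succ, Fin.val_castSucc]
      exact if_congr (by omega) rfl rfl
  simp only [acc, hsplit, Finset.sum_add_distrib, Finset.sum_ite_eq', Finset.mem_univ, if_true]

section ClusterErr

variable {U : Set (Vtx nM nD)}

lemma mem_clusterVset_zero (j : Fin nD) :
    Sum.inl (0, j) ∈ clusterVset U ↔ Sum.inl (0, j) ∈ U := by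
  change Xor _ (∃ _ : 0 < ((0 : Fin (nM + 1)) : ℕ), _) ↔ _
  simp [xor_def]

lemma mem_clusterVset_succ (i : Fin nM) (j : Fin nD) :
    Sum.inl (i.succ, j) ∈ clusterVset U ↔
      Xor (Sum.inl (i.succ, j) ∈ U) (Sum.inl (i.castSucc, j) ∈ U) := by
  change Xor _ (∃ _ : 0 < (i.succ : ℕ), _) ↔ _
  rw [exists_prop_of_true (p := 0 < (i.succ : ℕ)) (by simp)]
  rfl

/-- The cluster `ω_i` of the paper, with accumulated support `U`. -/
noncomputable def clusterErr (U : Set (Vtx nM nD)) : CircErr nM nD :=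
  ofVal ((clusterVset U).indicator 1)

lemma val_clusterErr (U : Set (Vtx nM nD)) :
    (clusterErr U).val = (clusterVset U).indicator 1 :=
  val_ofVal _

lemma acc_clusterErr (U : Set (Vtx nM nD)) (i : Fin (nM + 1)) (j : Fin nD) :
    acc (clusterErr U) i j = U.indicator 1 (Sum.inl (i, j)) := by
  classical
  induction i using Fin.induction with
  | zero => simp [clusterErr, ofVal, Set.indicator_apply, mem_clusterVset_zero]
  | succ i ih =>
    rw [acc_succ, ih]
    simp only [clusterErr, ofVal, Set.indicator_apply, mem_clusterVset_succ, Pi.one_apply]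
    by_cases hs : Sum.inl (i.succ, j) ∈ U <;> by_cases hc : Sum.inl (i.castSucc, j) ∈ U <;>
      simp [hs, hc, xor_def]
    decide

lemma accVal_clusterErr (U : Set (Vtx nM nD)) : (clusterErr U).accVal = U.indicator 1 := by
  ext (⟨i, j⟩ | k)
  · exact acc_clusterErr U i j
  · rfl

end ClusterErr

section CheckNbhd

variable {H : Fin nM → Fin nD → ZMod 2} {i : Fin nM}

def checkNbhd (H : Fin nM → Fin nD → ZMod 2) (i : Fin nM) : Set (Vtx nM nD) :=
  {v | v.elim (fun p => p.1 = i.castSucc ∧ H i p.2 = 1) (· = i)}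

lemma adj_of_mem_checkNbhd {u v : Vtx nM nD} (hu : u ∈ checkNbhd H i) (hv : v ∈ checkNbhd H i)
    (huv : u ≠ v) : Adj H u v := by
  rcases u with ⟨i₁, j₁⟩ | k₁ <;> rcases v with ⟨i₂, j₂⟩ | k₂
  · obtain ⟨rfl, h₁⟩ := hu
    obtain ⟨rfl, h₂⟩ := hv
    exact Or.inr ⟨i, rfl, rfl, h₁, h₂⟩
  · obtain ⟨rfl, h₁⟩ := hu
    obtain rfl := hv
    exact ⟨rfl, h₁⟩
  · obtain rfl := hu
    obtain ⟨rfl, h₂⟩ := hv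
    exact ⟨rfl, h₂⟩
  · obtain rfl := hu
    obtain rfl := hv
    exact absurd rfl huv

lemma outcomeErr_eq_of_eqOn {a b : CircErr nM nD} (h : Set.EqOn a.accVal b.accVal (checkNbhd H i)) :
    outcomeErr H a i = outcomeErr H b i := by
  have hf : a.f i = b.f i := h (show Sum.inr i ∈ checkNbhd H i from rfl)
  simp only [outcomeErr, hf]
  congr 1
  refine Finset.sum_congr rfl fun j _ => ?_
  by_cases hH : H i j = 0
  · simp [hH]
  · have hj : Sum.inl (i.castSucc, j) ∈ checkNbhd H i := ⟨rfl, zmod_two_eq_one_of_ne_zero hH⟩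
    rw [← accVal_inl, ← accVal_inl, h hj]

lemma outcomeErr_eq_zero_of_eqOn {a : CircErr nM nD} (h : Set.EqOn a.accVal 0 (checkNbhd H i)) :
    outcomeErr H a i = 0 := by
  have hf : a.f i = 0 := h (show Sum.inr i ∈ checkNbhd H i from rfl)
  simp only [outcomeErr, hf, add_zero]
  refine Finset.sum_eq_zero fun j _ => ?_
  by_cases hH : H i j = 0
  · simp [hH]
  · have hj : Sum.inl (i.castSucc, j) ∈ checkNbhd H i := ⟨rfl, zmod_two_eq_one_of_ne_zero hH⟩
    rw [← accVal_inl, h hj, Pi.zero_apply, mul_zero]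

end CheckNbhd

structure IsClusterUnion (H : Fin nM → Fin nD → ZMod 2) (ω : CircErr nM nD)
    (U : Set (Vtx nM nD)) : Prop where
  subset_accSupp : U ⊆ accSupp ω
  mem_of_step : ∀ ⦃u v⦄, u ∈ U → Step H ω u v → v ∈ U

lemma isClusterUnion_cluster (H : Fin nM → Fin nD → ZMod 2) (ω : CircErr nM nD)
    (v0 : Vtx nM nD) : IsClusterUnion H ω (cluster H ω v0) :=
  ⟨fun _ hu => hu.1, fun _ _ hu hs => ⟨hs.2.1, hu.2.tail hs⟩⟩

namespace IsClusterUnion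

variable {H : Fin nM → Fin nD → ZMod 2} {ω a b : CircErr nM nD} {U : Set (Vtx nM nD)}

lemma accVal_eq_one (hU : IsClusterUnion H ω U) {v : Vtx nM nD} (hv : v ∈ U) :
    ω.accVal v = 1 :=
  zmod_two_eq_one_of_ne_zero ((mem_accSupp_iff ω v).1 (hU.subset_accSupp hv))

lemma accVal_eq_zero_of_adj (hU : IsClusterUnion H ω U) {u v : Vtx nM nD} (hu : u ∈ U)
    (hv : v ∉ U) (hadj : Adj H u v) : ω.accVal v = 0 := by
  by_contra hne
  exact hv (hU.mem_of_step hu ⟨hU.subset_accSupp hu, (mem_accSupp_iff ω v).2 hne, hadj⟩)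

lemma val_eq_one (hU : IsClusterUnion H ω U) {v : Vtx nM nD} (hv : v ∈ clusterVset U) :
    ω.val v = 1 := by
  rcases v with ⟨i, j⟩ | k
  · change ω.e i j = 1
    induction i using Fin.cases with
    | zero => exact acc_zero ω j ▸ hU.accVal_eq_one ((mem_clusterVset_zero j).1 hv)
    | succ i =>
      have he : ω.e i.succ j =
          ω.accVal (Sum.inl (i.succ, j)) + ω.accVal (Sum.inl (i.castSucc, j)) := by
        rw [accVal_inl, accVal_inl, acc_succ, add_comm, CharTwo.add_cancel_left]
      have hdown : Adj H (Sum.inl (i.succ, j)) (Sum.inl (i.castSucc, j)) :=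
        Or.inl ⟨rfl, Or.inr (by simp)⟩
      have hup : Adj H (Sum.inl (i.castSucc, j)) (Sum.inl (i.succ, j)) :=
        Or.inl ⟨rfl, Or.inl (by simp)⟩
      rcases (mem_clusterVset_succ i j).1 hv with ⟨hs, hc⟩ | ⟨hc, hs⟩
      · rw [he, hU.accVal_eq_one hs, hU.accVal_eq_zero_of_adj hs hc hdown, add_zero]
      · rw [he, hU.accVal_eq_one hc, hU.accVal_eq_zero_of_adj hc hs hup, zero_add]
  · exact hU.accVal_eq_one hv

lemma indicator_eqOn_checkNbhd (hU : IsClusterUnion H ω U) {i : Fin nM}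
    (hmeet : (U ∩ checkNbhd H i).Nonempty) :
    Set.EqOn (U.indicator 1) ω.accVal (checkNbhd H i) := by
  obtain ⟨w, hwU, hwN⟩ := hmeet
  intro v hv
  by_cases hvU : v ∈ U
  · rw [Set.indicator_of_mem hvU, hU.accVal_eq_one hvU, Pi.one_apply]
  · have hwv : w ≠ v := fun h => hvU (h ▸ hwU)
    rw [Set.indicator_of_notMem hvU,
      hU.accVal_eq_zero_of_adj hwU hvU (adj_of_mem_checkNbhd hwN hv hwv)]

lemma outcomeErr_clusterErr (hU : IsClusterUnion H ω U) (hω : outcomeErr H ω = 0) :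
    outcomeErr H (clusterErr U) = 0 := by
  ext i
  by_cases hmeet : (U ∩ checkNbhd H i).Nonempty
  · rw [outcomeErr_eq_of_eqOn (accVal_clusterErr U ▸ hU.indicator_eqOn_checkNbhd hmeet), hω]
  · refine outcomeErr_eq_zero_of_eqOn fun v hv => ?_
    rw [accVal_clusterErr]
    exact Set.indicator_of_notMem (fun hvU => hmeet ⟨v, hvU, hv⟩) _

lemma outcomeErr_add_clusterErr (hU : IsClusterUnion H (a + b) U)
    (hout : outcomeErr H b = outcomeErr H a) :
    outcomeErr H (b + clusterErr U) = outcomeErr H b := by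
  have hω : outcomeErr H (a + b) = 0 := by
    rw [outcomeErr_add, hout]
    exact funext fun i => CharTwo.add_self_eq_zero (outcomeErr H a i)
  rw [outcomeErr_add, hU.outcomeErr_clusterErr hω, add_zero]

lemma wtErr_add_clusterErr (hU : IsClusterUnion H (a + b) U) :
    wtErr (b + clusterErr U) = wtOn a (clusterVset U) + wtOn b (clusterVset U)ᶜ := by
  rw [← wtOn_add_wtOn_compl _ (clusterVset U)]
  congr 1
  · refine wtOn_congr fun v hv => ?_
    have hab : a.val v + b.val v = 1 := by rw [← Pi.add_apply, ← val_add, hU.val_eq_one hv]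
    rw [val_add, Pi.add_apply, val_clusterErr, Set.indicator_of_mem hv, Pi.one_apply, ← hab,
      add_comm (a.val v), CharTwo.add_cancel_left]
  · refine wtOn_congr fun v hv => ?_
    rw [val_add, Pi.add_apply, val_clusterErr, Set.indicator_of_notMem hv, add_zero]

end IsClusterUnion

end

theorem stmt_13_general (nM nD : ℕ) (H : Fin nM → Fin nD → ZMod 2)
    (ε εhat : CircErr nM nD)
    (hout : outcomeErr H εhat = outcomeErr H ε)
    (hmin : ∀ ω' : CircErr nM nD,
        outcomeErr H ω' = outcomeErr H ε → wtErr εhat ≤ wtErr ω')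
    (v0 : Vtx nM nD) :
    wtOn εhat (clusterVset (cluster H (ε + εhat) v0)) ≤
      wtOn ε (clusterVset (cluster H (ε + εhat) v0)) := by
  set U := cluster H (ε + εhat) v0
  have hU : IsClusterUnion H (ε + εhat) U := isClusterUnion_cluster H (ε + εhat) v0
  have hexchange := hmin _ ((hU.outcomeErr_add_clusterErr hout).trans hout)
  rw [hU.wtErr_add_clusterErr, ← wtOn_add_wtOn_compl εhat (clusterVset U)] at hexchange
  omega

/-- let `ε` be a circuit error with outcome `m`, `ε̂` a minimum
weight circuit error with outcome `m`, and `ω = ε + ε̂`.  Then for every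
cluster `ω_i` of the cluster decomposition of `ω` (determined by the connected
component of a vertex `v0` of the accumulated error of `ω`), the restrictions
`ε_i = ε ∩ V(ω_i)` and `ε̂_i = ε̂ ∩ V(ω_i)` satisfy `|ε_i| ≥ |ε̂_i|`. -/
theorem stmt_13 (nM nD : ℕ) (H : Fin nM → Fin nD → ZMod 2)
    (ε εhat : CircErr nM nD)
    (hout : outcomeErr H εhat = outcomeErr H ε)
    (hmin : ∀ ω' : CircErr nM nD,
        outcomeErr H ω' = outcomeErr H ε → wtErr εhat ≤ wtErr ω')
    (v0 : Vtx nM nD) (hv0 : v0 ∈ accSupp (ε + εhat)) :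
    wtOn εhat (clusterVset (cluster H (ε + εhat) v0)) ≤
      wtOn ε (clusterVset (cluster H (ε + εhat) v0)) :=
  stmt_13_general nM nD H ε εhat hout hmin v0
end
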